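/- Let R be a ring, R' an R-algebra, and let K be an R-module with a finite filtration 0 = K₀ ⊆ K₁ ⊆ ⋯ ⊆ K_n = K such that each quotient K_{i+1}/K_i satisfies: (K_{i+1}/K_i) ⊗_R R' is a projective R'-module and Tor₁^R(K_{i+1}/K_i, R') = 0. Then K ⊗_R R' ≅ ⊕_{i=0}^{n-1} (K_{i+1}/K_i) ⊗_R R' as R'-modules, and K ⊗_R R' is projective. -/

import Mathlib

/-!
Tensoring the short exact sequence `0 → Kᵢ → Kᵢ₊₁ → Kᵢ₊₁/Kᵢ → 0` with `R'` keeps it exact on the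
left, because `Tor₁^R(Kᵢ₊₁/Kᵢ, R') = 0`: computing `Tor` through a projective resolution `P` of
`R'`, the sequence of complexes `0 → Kᵢ ⊗ P → Kᵢ₊₁ ⊗ P → (Kᵢ₊₁/Kᵢ) ⊗ P → 0` is exact, and its long
exact homology sequence ends in `Tor₁ → Kᵢ ⊗ R' → Kᵢ₊₁ ⊗ R'`. Since `(Kᵢ₊₁/Kᵢ) ⊗ R'` is projective,
the resulting sequence of `R'`-modules splits, and induction on `i` decomposes `K ⊗ R'` as the
direct sum of the `(Kᵢ₊₁/Kᵢ) ⊗ R'`, which is projective.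
-/

open CategoryTheory TensorProduct

/-- `Tor₁^R(M, N)`, as an object of `ModuleCat R`. -/
noncomputable def tor1 (R : Type) [CommRing R] (M N : Type) [AddCommGroup M] [Module R M]
    [AddCommGroup N] [Module R N] : ModuleCat R :=
  ((Tor (ModuleCat R) 1).obj (ModuleCat.of R M)).obj (ModuleCat.of R N)

namespace CategoryTheory

open Limits

variable {C D : Type*} [Category C] [Category D] [Abelian C] [HasProjectiveResolutions C]
  [Abelian D]

theorem NatTrans.leftDerived_zero_comp_fromLeftDerivedZero {F G : C ⥤ D} [F.Additive]
    [G.Additive] (α : F ⟶ G) :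
    NatTrans.leftDerived α 0 ≫ G.fromLeftDerivedZero = F.fromLeftDerivedZero ≫ α := by
  ext X
  let P := projectiveResolution X
  let φ := (NatTrans.mapHomologicalComplex α _).app P.complex
  have hsq : HomologicalComplex.opcyclesMap φ 0 ≫ P.fromLeftDerivedZero' G =
      P.fromLeftDerivedZero' F ≫ α.app X := by
    rw [← cancel_epi (HomologicalComplex.pOpcycles _ 0), HomologicalComplex.p_opcyclesMap_assoc,
      ProjectiveResolution.pOpcycles_comp_fromLeftDerivedZero',
      ProjectiveResolution.pOpcycles_comp_fromLeftDerivedZero'_assoc]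
    exact (α.naturality (P.π.f 0)).symm
  rw [NatTrans.comp_app, NatTrans.comp_app, ProjectiveResolution.leftDerived_app_eq α P,
    P.fromLeftDerivedZero_eq, P.fromLeftDerivedZero_eq]
  simp only [Category.assoc, Iso.inv_hom_id_assoc]
  congr 1
  have key : HomologicalComplex.homologyMap φ 0 ≫ HomologicalComplex.homologyι _ 0 ≫
      P.fromLeftDerivedZero' G = (HomologicalComplex.homologyι _ 0 ≫ P.fromLeftDerivedZero' F) ≫
      α.app X := by
    rw [HomologicalComplex.homologyι_naturality_assoc, hsq, Category.assoc]
  exact key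

theorem NatTrans.mono_app_of_mono_leftDerived_zero_app {F G : C ⥤ D} [F.Additive] [G.Additive]
    [PreservesFiniteColimits F] [PreservesFiniteColimits G] (α : F ⟶ G) (X : C)
    [Mono ((NatTrans.leftDerived α 0).app X)] : Mono (α.app X) := by
  have h := NatTrans.congr_app (NatTrans.leftDerived_zero_comp_fromLeftDerivedZero α) X
  rw [NatTrans.comp_app, NatTrans.comp_app, ← IsIso.inv_comp_eq] at h
  rw [← h]
  infer_instance

end CategoryTheory

namespace ModuleCat

open Limits MonoidalCategory

universe u

variable {R : Type u} [CommRing R]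

theorem mono_leftDerived_zero_tensoringLeft_map_of_isZero_tor (S : ShortComplex (ModuleCat.{u} R))
    (hS : S.ShortExact) (N : ModuleCat.{u} R) (htor : IsZero (((Tor _ 1).obj S.X₃).obj N)) :
    Mono ((NatTrans.leftDerived ((tensoringLeft _).map S.f) 0).app N) := by
  let P := CategoryTheory.projectiveResolution N
  let Φ {X Y : ModuleCat R} (f : X ⟶ Y) := (NatTrans.mapHomologicalComplex
    ((tensoringLeft (ModuleCat R)).map f) (ComplexShape.down ℕ)).app P.complex
  have hzero : Φ S.f ≫ Φ S.g = 0 := by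
    rw [← NatTrans.comp_app, ← NatTrans.mapHomologicalComplex_comp, ← Functor.map_comp, S.zero,
      Functor.map_zero]
    rfl
  have hS₂ : (ShortComplex.mk _ _ hzero).ShortExact :=
    HomologicalComplex.shortExact_of_degreewise_shortExact _ fun i => by
      have : Module.Projective R (P.complex.X i) :=
        (IsProjective.iff_projective _).mpr (P.projective i)
      exact hS.map_of_exact (tensorRight (P.complex.X i))
  have hrel : (ComplexShape.down ℕ).Rel 1 0 := rfl
  -- the connecting map starts at `H₁(S.X₃ ⊗ P) ≅ Tor₁(S.X₃, N)`
  have hδ : hS₂.δ 1 0 hrel = 0 :=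
    (htor.of_iso (P.isoLeftDerivedObj _ 1).symm).eq_of_src _ _
  have : Mono ((HomologicalComplex.homologyFunctor _ _ 0).map (Φ S.f)) :=
    (hS₂.homology_exact₁ 1 0 hrel).mono_g hδ
  rw [ProjectiveResolution.leftDerived_app_eq _ P]
  infer_instance

end ModuleCat

section TensorExact

variable {R : Type} [CommRing R] {A B Q : Type} [AddCommGroup A] [Module R A]
  [AddCommGroup B] [Module R B] [AddCommGroup Q] [Module R Q]
  {f : A →ₗ[R] B} {g : B →ₗ[R] Q}

theorem Function.Exact.lTensor_injective_of_subsingleton_tor1 (hfg : Function.Exact f g)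
    (hf : Function.Injective f) (hg : Function.Surjective g) (N : Type) [AddCommGroup N]
    [Module R N] [Subsingleton (tor1 R Q N)] : Function.Injective (f.lTensor N) := by
  rw [LinearMap.lTensor_inj_iff_rTensor_inj]
  let S := ModuleCat.shortComplexOfCompEqZero f g hfg.linearMap_comp_eq_zero
  have hS : S.ShortExact := ModuleCat.shortComplex_shortExact S hfg hf hg
  have : Mono ((NatTrans.leftDerived ((MonoidalCategory.tensoringLeft _).map S.f) 0).app
      (ModuleCat.of R N)) :=
    ModuleCat.mono_leftDerived_zero_tensoringLeft_map_of_isZero_tor S hS _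
      (ModuleCat.isZero_of_subsingleton (tor1 R Q N))
  have : ∀ X : ModuleCat R, Limits.PreservesFiniteColimits
      ((MonoidalCategory.tensoringLeft (ModuleCat R)).obj X) := fun X =>
    inferInstanceAs (Limits.PreservesFiniteColimits (MonoidalCategory.tensorLeft X))
  have hmono : Mono (((MonoidalCategory.tensoringLeft _).map S.f).app (ModuleCat.of R N)) :=
    NatTrans.mono_app_of_mono_leftDerived_zero_app _ _
  exact (ModuleCat.mono_iff_injective _).mp hmono

theorem Function.Exact.nonempty_baseChange_equiv_prod {R' : Type} [Ring R'] [Algebra R R']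
    (hfg : Function.Exact f g) (hf : Function.Injective f) (hg : Function.Surjective g)
    [Module.Projective R' (R' ⊗[R] Q)] [Subsingleton (tor1 R Q R')] :
    Nonempty ((R' ⊗[R] B) ≃ₗ[R'] (R' ⊗[R] A) × (R' ⊗[R] Q)) := by
  have hexact : Function.Exact (f.baseChange R') (g.baseChange R') := lTensor_exact R' hfg hg
  have hf' : Function.Injective (f.baseChange R') :=
    hfg.lTensor_injective_of_subsingleton_tor1 hf hg R'
  have hg' : Function.Surjective (g.baseChange R') := LinearMap.lTensor_surjective R' hg
  obtain ⟨l, hl⟩ := Module.projective_lifting_property (g.baseChange R') LinearMap.id hg'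
  exact ⟨(hexact.splitSurjectiveEquiv hf' ⟨l, hl⟩).1⟩

end TensorExact

variable (R : Type*) [Semiring R] {n : ℕ} (M : Fin (n + 1) → Type*) [∀ i, AddCommMonoid (M i)]
  [∀ i, Module R (M i)] in
def Fin.snocLinearEquiv : (M (Fin.last n) × Π i, M (Fin.castSucc i)) ≃ₗ[R] (Π i, M i) where
  __ := Fin.snocEquiv M
  map_add' x y := funext <| Fin.lastCases (by simp [Fin.snocEquiv]) (by simp [Fin.snocEquiv])
  map_smul' c x := funext <| Fin.lastCases (by simp [Fin.snocEquiv]) (by simp [Fin.snocEquiv])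

section Filtration

variable {R R' K : Type} [CommRing R] [Ring R'] [Algebra R R'] [AddCommGroup K] [Module R K]

abbrev gradedPiece (F : ℕ → Submodule R K) (i : ℕ) : Type :=
  ↥(F (i + 1)) ⧸ Submodule.comap (F (i + 1)).subtype (F i)

theorem nonempty_baseChange_equiv_pi_gradedPiece (F : ℕ → Submodule R K) (hmono : Monotone F)
    (h0 : F 0 = ⊥) (m : ℕ) (hproj : ∀ i < m, Module.Projective R' (R' ⊗[R] gradedPiece F i))
    (htor : ∀ i < m, Subsingleton (tor1 R (gradedPiece F i) R')) :
    Nonempty ((R' ⊗[R] F m) ≃ₗ[R'] Π i : Fin m, R' ⊗[R] gradedPiece F i) := by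
  induction m with
  | zero =>
    have : Subsingleton (F 0) := by rw [h0]; infer_instance
    exact ⟨LinearEquiv.ofSubsingleton _ _⟩
  | succ m ih =>
    obtain ⟨e⟩ := ih (fun i hi => hproj i (by omega)) (fun i hi => htor i (by omega))
    have hexact : Function.Exact (Submodule.inclusion (hmono m.le_succ))
        (Submodule.comap (F (m + 1)).subtype (F m)).mkQ := by
      rw [LinearMap.exact_iff, Submodule.ker_mkQ, Submodule.range_inclusion]
    have := hproj m m.lt_succ_self
    have := htor m m.lt_succ_self
    obtain ⟨e'⟩ := hexact.nonempty_baseChange_equiv_prod (R' := R')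
      (Submodule.inclusion_injective _) (Submodule.mkQ_surjective _)
    exact ⟨e' ≪≫ₗ LinearEquiv.prodComm _ _ _ ≪≫ₗ (LinearEquiv.refl _ _).prodCongr e ≪≫ₗ
      Fin.snocLinearEquiv R' (fun i => R' ⊗[R] gradedPiece F i)⟩

end Filtration

theorem stmt13 {R R' : Type} [CommRing R] [Ring R'] [Algebra R R']
    {K : Type} [AddCommGroup K] [Module R K]
    (n : ℕ) (F : ℕ → Submodule R K) (hmono : Monotone F)
    (h0 : F 0 = ⊥) (hn : F n = ⊤)
    (hproj : ∀ i < n, Module.Projective R'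
      (R' ⊗[R] (↥(F (i + 1)) ⧸ Submodule.comap (F (i + 1)).subtype (F i))))
    (htor : ∀ i < n, Subsingleton
      ↥(tor1 R (↥(F (i + 1)) ⧸ Submodule.comap (F (i + 1)).subtype (F i)) R')) :
    Nonempty ((R' ⊗[R] K) ≃ₗ[R'] ((i : Fin n) →
      R' ⊗[R] (↥(F (i.1 + 1)) ⧸ Submodule.comap (F (i.1 + 1)).subtype (F i.1)))) ∧
    Module.Projective R' (R' ⊗[R] K) := by
  obtain ⟨e⟩ := nonempty_baseChange_equiv_pi_gradedPiece F hmono h0 n hproj htor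
  let eK : (R' ⊗[R] K) ≃ₗ[R'] R' ⊗[R] F n :=
    (Submodule.topEquiv.symm ≪≫ₗ LinearEquiv.ofEq _ _ hn.symm).baseChange R R' K (F n)
  have : ∀ i : Fin n, Module.Projective R' (R' ⊗[R] gradedPiece F i) := fun i => hproj i i.2
  exact ⟨⟨eK ≪≫ₗ e⟩, .of_equiv (DFinsupp.linearEquivFunOnFintype ≪≫ₗ (eK ≪≫ₗ e).symm)⟩
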